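/- arXiv:2305.01639 — 2 statements merged into one kernel-verified Lean document; each statement's English description precedes it below -/
import Mathlib

section
/- The exponential mechanism with privacy parameter ε is ε-differentially private. -/
/-- The output probability of the exponential mechanism with utility `q`, sensitivity
bound `Δ`, and privacy parameter `ε`, on candidate `y` (over a finite candidate set):
proportional to `exp(ε·q(D,y)/(2Δ))`. -/
noncomputable def emProb {D Y : Type*} [Fintype Y] (q : D → Y → ℝ) (Δ ε : ℝ)
    (d : D) (y : Y) : ℝ :=
  Real.exp (ε * q d y / (2 * Δ)) / ∑ y', Real.exp (ε * q d y' / (2 * Δ))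

/-!
Changing the dataset moves every scaled score `ε q(d, z) / (2Δ)` by at most `ε / 2`, so the
weight of the chosen output grows by a factor at most `e^{ε/2}` and the normalising sum shrinks
by a factor at most `e^{ε/2}`; together these give `e^ε`.
-/

open Real Finset

lemma exp_le_exp_mul_exp_of_sub_le {a b c : ℝ} (h : a - b ≤ c) : exp a ≤ exp c * exp b := by
  rw [← exp_add, exp_le_exp]
  linarith

lemma sum_exp_le_exp_mul_sum_exp {Y : Type*} (s : Finset Y) {f g : Y → ℝ} {c : ℝ}
    (h : ∀ z ∈ s, f z - g z ≤ c) :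
    ∑ z ∈ s, exp (f z) ≤ exp c * ∑ z ∈ s, exp (g z) := by
  rw [mul_sum]
  exact sum_le_sum fun z hz => exp_le_exp_mul_exp_of_sub_le (h z hz)

lemma exp_div_sum_exp_le_exp_two_mul {Y : Type*} [Fintype Y] {f g : Y → ℝ} {c : ℝ}
    (h : ∀ z, |f z - g z| ≤ c) (y : Y) :
    exp (f y) / ∑ z, exp (f z) ≤ exp (2 * c) * (exp (g y) / ∑ z, exp (g z)) := by
  have hpos : ∀ u : Y → ℝ, 0 < ∑ z, exp (u z) := fun u =>
    sum_pos (fun z _ => exp_pos (u z)) ⟨y, mem_univ y⟩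
  have hweight : exp (f y) ≤ exp c * exp (g y) :=
    exp_le_exp_mul_exp_of_sub_le (abs_le.mp (h y)).2
  have hnormaliser : (∑ z, exp (g z)) / exp c ≤ ∑ z, exp (f z) := by
    rw [div_le_iff₀' (exp_pos c)]
    exact sum_exp_le_exp_mul_sum_exp univ fun z _ => by linarith [(abs_le.mp (h z)).1]
  calc exp (f y) / ∑ z, exp (f z)
      ≤ exp c * exp (g y) / ((∑ z, exp (g z)) / exp c) :=
        div_le_div₀ (by positivity) hweight (div_pos (hpos g) (exp_pos c)) hnormaliser
    _ = exp (2 * c) * (exp (g y) / ∑ z, exp (g z)) := by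
        rw [two_mul, exp_add]
        field_simp

/-- The exponential mechanism with privacy parameter `ε` is `ε`-differentially private:
for all neighboring datasets `d, d'` and every output `y`,
`Pr[EM_q(d) = y] ≤ e^ε · Pr[EM_q(d') = y]`. -/
theorem exponential_mechanism_dp {D Y : Type*} [Fintype Y] (adj : D → D → Prop)
    (q : D → Y → ℝ) (Δ ε : ℝ) (hΔ : 0 < Δ) (hε : 0 < ε)
    (hsens : ∀ d d', adj d d' → ∀ y, |q d y - q d' y| ≤ Δ) :
    ∀ d d', adj d d' → ∀ y : Y,
      emProb q Δ ε d y ≤ Real.exp ε * emProb q Δ ε d' y := by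
  intro d d' hadj y
  have hscaled : ∀ z, |ε * q d z / (2 * Δ) - ε * q d' z / (2 * Δ)| ≤ ε / 2 := by
    intro z
    have h2Δ : 0 < 2 * Δ := by positivity
    calc |ε * q d z / (2 * Δ) - ε * q d' z / (2 * Δ)|
        = ε * |q d z - q d' z| / (2 * Δ) := by
          rw [← sub_div, ← mul_sub, abs_div, abs_mul, abs_of_pos hε, abs_of_pos h2Δ]
      _ ≤ ε * Δ / (2 * Δ) := by gcongr; exact hsens d d' hadj z
      _ = ε / 2 := by field_simp
  have := exp_div_sum_exp_le_exp_two_mul hscaled y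
  rwa [mul_div_cancel₀ ε two_ne_zero] at this
end

section
/- The exponential mechanism with parameter ε is (α, ε²α/2)-Rényi differentially private for every order α > 1. -/
open Real Set Finset

namespace Real

theorem sinh_le_mul_cosh {x : ℝ} (hx : 0 ≤ x) : sinh x ≤ x * cosh x := by
  have hmono : MonotoneOn (fun t => t * cosh t - sinh t) (Ici 0) := by
    refine monotoneOn_of_hasDerivWithinAt_nonneg (f' := fun t => t * sinh t) (convex_Ici 0)
      (by fun_prop) (fun t _ => ?_) (fun t ht => ?_)
    · exact (((hasDerivAt_id t).mul (hasDerivAt_cosh t)).sub (hasDerivAt_sinh t)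
        |>.congr_deriv (by simp)).hasDerivWithinAt
    · rw [interior_Ici] at ht
      exact mul_nonneg ht.le (sinh_nonneg_iff.2 ht.le)
  simpa using hmono self_mem_Ici hx hx

theorem antitoneOn_cosh_mul_exp_neg_sq_div_two :
    AntitoneOn (fun s => cosh s * exp (-(s ^ 2 / 2))) (Ici 0) := by
  refine antitoneOn_of_hasDerivWithinAt_nonpos
    (f' := fun s => (sinh s - s * cosh s) * exp (-(s ^ 2 / 2))) (convex_Ici 0)
    (by fun_prop) (fun s _ => ?_) (fun s hs => ?_)
  · have hexponent : HasDerivAt (fun s => -(s ^ 2 / 2)) (-s) s := by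
      simpa using ((hasDerivAt_pow 2 s).div_const 2).fun_neg
    exact ((hasDerivAt_cosh s).mul hexponent.exp |>.congr_deriv (by ring)).hasDerivWithinAt
  · rw [interior_Ici] at hs
    exact mul_nonpos_of_nonpos_of_nonneg (sub_nonpos.2 (sinh_le_mul_cosh hs.le)) (exp_pos _).le

theorem cosh_div_cosh_le_exp {a b : ℝ} (hb : 0 ≤ b) (hba : b ≤ a) :
    cosh a / cosh b ≤ exp ((a ^ 2 - b ^ 2) / 2) := by
  have h : cosh a * exp (-(a ^ 2 / 2)) ≤ cosh b * exp (-(b ^ 2 / 2)) :=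
    antitoneOn_cosh_mul_exp_neg_sq_div_two hb (hb.trans hba) hba
  rw [div_le_iff₀ (cosh_pos b)]
  calc cosh a = cosh a * exp (-(a ^ 2 / 2)) * exp (a ^ 2 / 2) := by
        rw [mul_assoc, ← exp_add, neg_add_cancel, exp_zero, mul_one]
    _ ≤ cosh b * exp (-(b ^ 2 / 2)) * exp (a ^ 2 / 2) := by gcongr
    _ = exp ((a ^ 2 - b ^ 2) / 2) * cosh b := by
        rw [mul_assoc, ← exp_add, mul_comm]; ring_nf

-- `(b - a)` times the secant of `t ↦ t ^ α` through `a = e^{-ε}`, `b = e^ε`, evaluated at `1`.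
theorem secant_rpow_exp_eq (ε α : ℝ) :
    (exp ε - 1) * exp (-ε) ^ α + (1 - exp (-ε)) * exp ε ^ α
      = (exp ε - exp (-ε)) * (cosh ((α - 1 / 2) * ε) / cosh (ε / 2)) := by
  set u := exp (ε / 2) with hu
  set v := exp (α * ε) with hv
  have hu0 : u ≠ 0 := (exp_pos _).ne'
  have hv0 : v ≠ 0 := (exp_pos _).ne'
  have he : exp ε = u * u := by rw [hu, ← exp_add, add_halves]
  have hc : cosh (ε / 2) = (u + u⁻¹) / 2 := by rw [cosh_eq, hu, exp_neg]
  have hc' : cosh ((α - 1 / 2) * ε) = (v / u + u / v) / 2 := by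
    rw [cosh_eq, hu, hv, ← exp_sub, ← exp_sub]; ring_nf
  rw [← exp_mul, ← exp_mul, exp_neg, neg_mul, exp_neg, mul_comm ε α, ← hv, he, hc, hc']
  have hcpos : u + u⁻¹ ≠ 0 := by positivity
  field_simp
  ring

end Real

theorem ConvexOn.sub_mul_le_of_mem_Icc {f : ℝ → ℝ} {a b x : ℝ} (hf : ConvexOn ℝ (Icc a b) f)
    (hx : x ∈ Icc a b) : (b - a) * f x ≤ (b - x) * f a + (x - a) * f b := by
  obtain ⟨hax, hxb⟩ := hx
  rcases (hax.trans hxb).eq_or_lt with rfl | hab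
  · obtain rfl : x = a := le_antisymm hxb hax
    simp
  have hba : 0 < b - a := sub_pos.2 hab
  have hcomb : (b - x) / (b - a) * a + (x - a) / (b - a) * b = x := by
    field_simp; ring
  have key := hf.2 (left_mem_Icc.2 hab.le) (right_mem_Icc.2 hab.le)
    (div_nonneg (sub_nonneg.2 hxb) hba.le : 0 ≤ (b - x) / (b - a))
    (div_nonneg (sub_nonneg.2 hax) hba.le : 0 ≤ (x - a) / (b - a)) (by field_simp; ring)
  simp only [smul_eq_mul, hcomb] at key
  calc (b - a) * f x ≤ (b - a) * ((b - x) / (b - a) * f a + (x - a) / (b - a) * f b) := by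
        gcongr
    _ = (b - x) * f a + (x - a) * f b := by field_simp

theorem ConvexOn.sub_mul_sum_le_of_mem_Icc {ι : Type*} (s : Finset ι) {f : ℝ → ℝ} {a b : ℝ}
    (hf : ConvexOn ℝ (Icc a b) f) {w r : ι → ℝ} (hw : ∀ i ∈ s, 0 ≤ w i)
    (hr : ∀ i ∈ s, r i ∈ Icc a b) :
    (b - a) * ∑ i ∈ s, w i * f (r i) ≤
      (b * ∑ i ∈ s, w i - ∑ i ∈ s, w i * r i) * f a
        + (∑ i ∈ s, w i * r i - a * ∑ i ∈ s, w i) * f b := by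
  calc (b - a) * ∑ i ∈ s, w i * f (r i) = ∑ i ∈ s, w i * ((b - a) * f (r i)) := by
        rw [mul_sum]; exact sum_congr rfl fun i _ => by ring
    _ ≤ ∑ i ∈ s, w i * ((b - r i) * f a + (r i - a) * f b) :=
        sum_le_sum fun i hi =>
          mul_le_mul_of_nonneg_left (hf.sub_mul_le_of_mem_Icc (hr i hi)) (hw i hi)
    _ = _ := by
        simp only [mul_sum, sum_mul, ← sum_sub_distrib, ← sum_add_distrib]
        exact sum_congr rfl fun i _ => by ring

noncomputable def renyiDiv {Y : Type*} [Fintype Y] (α : ℝ) (p p' : Y → ℝ) : ℝ :=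
  (α - 1)⁻¹ * log (∑ y, p' y * (p y / p' y) ^ α)

theorem renyiDiv_le_of_div_mem_Icc {Y : Type*} [Fintype Y] {p p' : Y → ℝ} {ε α : ℝ}
    (hε : 0 < ε) (hα : 1 < α) (hp : ∑ y, p y = 1) (hp' : ∑ y, p' y = 1)
    (hp'_pos : ∀ y, 0 < p' y) (hratio : ∀ y, p y / p' y ∈ Icc (exp (-ε)) (exp ε)) :
    renyiDiv α p p' ≤ ε ^ 2 * α / 2 := by
  set S := ∑ y, p' y * (p y / p' y) ^ α
  have hmean : ∑ y, p' y * (p y / p' y) = 1 := by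
    simp_rw [mul_div_cancel₀ _ (hp'_pos _).ne']; exact hp
  have hconv : ConvexOn ℝ (Icc (exp (-ε)) (exp ε)) (fun x : ℝ => x ^ α) :=
    (convexOn_rpow hα.le).subset (Icc_subset_Ici_self.trans
      (Ici_subset_Ici.2 (exp_pos (-ε)).le)) (convex_Icc _ _)
  have hsecant := hconv.sub_mul_sum_le_of_mem_Icc univ
    (fun y _ => (hp'_pos y).le) (fun y _ => hratio y)
  rw [hp', hmean, mul_one, mul_one, secant_rpow_exp_eq] at hsecant
  have hS : S ≤ cosh ((α - 1 / 2) * ε) / cosh (ε / 2) :=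
    le_of_mul_le_mul_left hsecant (sub_pos.2 (exp_lt_exp.2 (by linarith)))
  have hS_pos : 0 < S :=
    sum_pos (fun y _ => mul_pos (hp'_pos y) (rpow_pos_of_pos
      ((exp_pos _).trans_le (hratio y).1) α)) (nonempty_of_sum_ne_zero (hp'.trans_ne one_ne_zero))
  have hlog : log S ≤ (α - 1) * (ε ^ 2 * α / 2) := by
    rw [log_le_iff_le_exp hS_pos]
    calc S ≤ cosh ((α - 1 / 2) * ε) / cosh (ε / 2) := hS
      _ ≤ exp ((((α - 1 / 2) * ε) ^ 2 - (ε / 2) ^ 2) / 2) :=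
          cosh_div_cosh_le_exp (by positivity) (by nlinarith)
      _ = exp ((α - 1) * (ε ^ 2 * α / 2)) := by ring_nf
  rwa [renyiDiv, inv_mul_le_iff₀ (sub_pos.2 hα)]

theorem exp_div_sum_exp_div_le {Y : Type*} [Fintype Y] {f g : Y → ℝ} {c : ℝ}
    (hfg : ∀ y, |f y - g y| ≤ c) (y : Y) :
    (exp (f y) / ∑ y', exp (f y')) / (exp (g y) / ∑ y', exp (g y')) ≤ exp (2 * c) := by
  have : Nonempty Y := ⟨y⟩
  have hf : 0 < ∑ y', exp (f y') := sum_pos (fun _ _ => exp_pos _) univ_nonempty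
  have hsum : ∑ y', exp (g y') ≤ exp c * ∑ y', exp (f y') := by
    rw [mul_sum]
    refine sum_le_sum fun y' _ => ?_
    rw [← exp_add]
    exact exp_le_exp.2 (by linarith [(abs_le.1 (hfg y')).1])
  have hpoint : exp (f y - g y) ≤ exp c := exp_le_exp.2 (abs_le.1 (hfg y)).2
  calc (exp (f y) / ∑ y', exp (f y')) / (exp (g y) / ∑ y', exp (g y'))
      = exp (f y - g y) * ((∑ y', exp (g y')) / ∑ y', exp (f y')) := by
        rw [exp_sub]; field_simp
    _ ≤ exp c * exp c := by
        gcongr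
        rwa [div_le_iff₀ hf]
    _ = exp (2 * c) := by rw [← exp_add, two_mul]

theorem exp_div_sum_exp_div_mem_Icc {Y : Type*} [Fintype Y] {f g : Y → ℝ} {c : ℝ}
    (hfg : ∀ y, |f y - g y| ≤ c) (y : Y) :
    (exp (f y) / ∑ y', exp (f y')) / (exp (g y) / ∑ y', exp (g y'))
      ∈ Icc (exp (-(2 * c))) (exp (2 * c)) := by
  refine ⟨?_, exp_div_sum_exp_div_le hfg y⟩
  have hgf := exp_div_sum_exp_div_le (fun y => (abs_sub_comm (g y) (f y)).trans_le (hfg y)) y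
  have : Nonempty Y := ⟨y⟩
  rw [exp_neg, ← inv_div]
  exact inv_anti₀ (by positivity) hgf

section ExponentialMechanism

variable {D Y : Type*} [Fintype Y] (q : D → Y → ℝ) (Δ ε : ℝ)

theorem emProb_pos [Nonempty Y] (d : D) (y : Y) : 0 < emProb q Δ ε d y :=
  div_pos (exp_pos _) (sum_pos (fun _ _ => exp_pos _) univ_nonempty)

theorem sum_emProb [Nonempty Y] (d : D) : ∑ y, emProb q Δ ε d y = 1 := by
  simp only [emProb]
  rw [← sum_div, div_self (sum_pos (fun _ _ => exp_pos _) univ_nonempty).ne']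

theorem emProb_div_emProb_mem_Icc (hΔ : 0 < Δ) (hε : 0 < ε) {d d' : D}
    (hsens : ∀ y, |q d y - q d' y| ≤ Δ) (y : Y) :
    emProb q Δ ε d y / emProb q Δ ε d' y ∈ Icc (exp (-ε)) (exp ε) := by
  have hexponent : ∀ y, |ε * q d y / (2 * Δ) - ε * q d' y / (2 * Δ)| ≤ ε / 2 := fun y => by
    rw [← sub_div, ← mul_sub, abs_div, abs_mul, abs_of_pos hε,
      abs_of_pos (by positivity : (0 : ℝ) < 2 * Δ), div_le_iff₀ (by positivity)]
    linarith [mul_le_mul_of_nonneg_left (hsens y) hε.le]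
  simpa only [emProb, mul_div_cancel₀ ε two_ne_zero] using exp_div_sum_exp_div_mem_Icc hexponent y

end ExponentialMechanism

/-- The exponential mechanism with parameter `ε` is `(α, ε²α/2)`-Rényi differentially
private for every order `α > 1`: for all neighboring datasets `d, d'`, the Rényi
divergence of order `α` between the output distributions is at most `ε²·α/2`. -/
theorem exponential_mechanism_rdp {D Y : Type*} [Fintype Y] (adj : D → D → Prop)
    (q : D → Y → ℝ) (Δ ε : ℝ) (hΔ : 0 < Δ) (hε : 0 < ε)
    (hsens : ∀ d d', adj d d' → ∀ y, |q d y - q d' y| ≤ Δ) :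
    ∀ α : ℝ, 1 < α → ∀ d d', adj d d' →
      (α - 1)⁻¹ *
          Real.log (∑ y, emProb q Δ ε d' y * (emProb q Δ ε d y / emProb q Δ ε d' y) ^ α)
        ≤ ε ^ 2 * α / 2 := by
  intro α hα d d' hadj
  cases isEmpty_or_nonempty Y
  · simp only [univ_eq_empty, sum_empty, log_zero, mul_zero]
    positivity
  exact renyiDiv_le_of_div_mem_Icc hε hα (sum_emProb q Δ ε d) (sum_emProb q Δ ε d')
    (emProb_pos q Δ ε d') (emProb_div_emProb_mem_Icc q Δ ε hΔ hε (hsens d d' hadj))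
end
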